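/- Let X and Y be Tychonoff (completely regular Hausdorff) spaces, E and F nontrivial real normed vector spaces, and T : C*(X,E) → C*(Y,F) a biseparating map. Then there exists a continuous map h : Y → StoneCech X with dense range such that, for every y ∈ Y, h(y) is a support point of y. -/

import Mathlib

open scoped BoundedContinuousFunction
open Set

/-- `x ∈ StoneCech X` is a support point of `y ∈ Y` (relative to a map
`T : C*(X,E) → C*(Y,F)`) if for every open neighborhood `U` of `x` in `StoneCech X` there is
`f ∈ C*(X,E)` with cozero set contained in `ι_X⁻¹(U)` and `(Tf)(y) ≠ 0`. -/
def IsSupportPoint {X Y E F : Type*} [TopologicalSpace X] [TopologicalSpace Y]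
    [NormedAddCommGroup E] [NormedAddCommGroup F]
    (T : (X →ᵇ E) → (Y →ᵇ F)) (y : Y) (x : StoneCech X) : Prop :=
  ∀ U : Set (StoneCech X), IsOpen U → x ∈ U →
    ∃ f : X →ᵇ E, {x' : X | f x' ≠ 0} ⊆ stoneCechUnit ⁻¹' U ∧ T f y ≠ 0

/-!
Since `StoneCech X` is compact, a partition of unity on it cuts any `f ∈ C*(X,E)` into finitely
many pieces with cozero sets in prescribed open sets; by additivity, if no point of `StoneCech X`
were a support point of `y`, then `(Tf)(y) = 0` for every `f`, which surjectivity rules out. So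
every `y` has a support point `h y`. Separation forces `h y` into the closure of `ι_X(c(f))`
whenever `(Tf)(y) ≠ 0`; as `{y' | (Tf)(y') ≠ 0}` is open, this gives continuity of `h`, and
applied to a nonzero bump function `f` (with `Tf ≠ 0` by injectivity) it gives density of the
range.
-/

section

variable {X Y E F : Type*} [TopologicalSpace X] [TopologicalSpace Y]
  [NormedAddCommGroup E] [NormedAddCommGroup F]

def IsSeparating (T : (X →ᵇ E) → (Y →ᵇ F)) : Prop :=
  ∀ f g : X →ᵇ E, (∀ x, ‖f x‖ * ‖g x‖ = 0) → ∀ y, ‖T f y‖ * ‖T g y‖ = 0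

theorem IsSupportPoint.mem_of_cozero_subset {T : (X →ᵇ E) → (Y →ᵇ F)} (hT : IsSeparating T)
    {y : Y} {x : StoneCech X} (hx : IsSupportPoint T y x) {V : Set (StoneCech X)}
    (hV : IsClosed V) {f : X →ᵇ E} (hf : {x' | f x' ≠ 0} ⊆ stoneCechUnit ⁻¹' V)
    (hfy : T f y ≠ 0) : x ∈ V := by
  by_contra hxV
  obtain ⟨g, hg, hgy⟩ := hx Vᶜ hV.isOpen_compl hxV
  have hfg : ∀ x', ‖f x'‖ * ‖g x'‖ = 0 := fun x' => by
    by_cases hfx : f x' = 0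
    · simp [hfx]
    · have hgx : g x' = 0 := not_not.1 fun hgx => hg hgx (hf hfx)
      simp [hgx]
  simpa [hfy, hgy] using hT f g hfg y

theorem continuous_of_isSupportPoint {T : (X →ᵇ E) → (Y →ᵇ F)} (hT : IsSeparating T)
    {h : Y → StoneCech X} (hh : ∀ y, IsSupportPoint T y (h y)) : Continuous h := by
  refine continuous_iff_continuousAt.2 fun y U hU => ?_
  obtain ⟨V, hV, hVc, hVU⟩ := exists_mem_nhds_isClosed_subset hU
  obtain ⟨f, hf, hfy⟩ := hh y (interior V) isOpen_interior (mem_interior_iff_mem_nhds.2 hV)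
  rw [Filter.mem_map]
  filter_upwards [(T f).continuous.continuousAt.eventually_ne hfy] with y' hy'
  exact hVU ((hh y').mem_of_cozero_subset hT hVc (hf.trans (preimage_mono interior_subset)) hy')

def stoneCechRestrict (φ : C(StoneCech X, ℝ)) : X →ᵇ ℝ :=
  (BoundedContinuousFunction.mkOfCompact φ).compContinuous
    ⟨stoneCechUnit, continuous_stoneCechUnit⟩

variable [NormedSpace ℝ E]

@[simp]
lemma stoneCechRestrict_smul_apply (φ : C(StoneCech X, ℝ)) (f : X →ᵇ E) (x : X) :
    (stoneCechRestrict φ • f) x = φ (stoneCechUnit x) • f x :=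
  rfl

lemma cozero_stoneCechRestrict_smul_subset (φ : C(StoneCech X, ℝ)) (f : X →ᵇ E) :
    {x | (stoneCechRestrict φ • f) x ≠ 0} ⊆ stoneCechUnit ⁻¹' Function.support φ :=
  fun _ hx hφ => hx (by simp [hφ])

lemma sum_stoneCechRestrict_smul {ι : Type*} [Fintype ι]
    (p : PartitionOfUnity ι (StoneCech X)) (f : X →ᵇ E) :
    ∑ i, stoneCechRestrict (p i) • f = f := by
  ext x
  simp only [BoundedContinuousFunction.sum_apply, stoneCechRestrict_smul_apply,
    ← Finset.sum_smul]
  rw [← finsum_eq_sum_of_fintype, p.sum_eq_one (mem_univ _), one_smul]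

lemma exists_ne_zero_cozero_subset [Nontrivial E] {U : Set (StoneCech X)} (hU : IsOpen U)
    (hne : U.Nonempty) : ∃ f : X →ᵇ E, f ≠ 0 ∧ {x | f x ≠ 0} ⊆ stoneCechUnit ⁻¹' U := by
  obtain ⟨x₀, hx₀⟩ := denseRange_stoneCechUnit.exists_mem_open hU hne
  obtain ⟨φ, hφU, hφx₀, -⟩ := exists_continuous_zero_one_of_isClosed hU.isClosed_compl
    isClosed_singleton (disjoint_singleton_right.2 (not_not.2 hx₀))
  obtain ⟨e, he⟩ := exists_ne (0 : E)
  refine ⟨stoneCechRestrict φ • BoundedContinuousFunction.const X e, fun h => he ?_,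
    (cozero_stoneCechRestrict_smul_subset _ _).trans fun x hx => ?_⟩
  · simpa [hφx₀ rfl] using DFunLike.congr_fun h x₀
  · by_contra hxU
    exact hx (hφU hxU)

theorem exists_isSupportPoint (T : (X →ᵇ E) →+ (Y →ᵇ F)) {y : Y} {f : X →ᵇ E}
    (hfy : T f y ≠ 0) : ∃ x, IsSupportPoint T y x := by
  by_contra! hno
  simp only [IsSupportPoint, not_forall, not_exists, not_and, not_not] at hno
  choose U hUo hxU hU using hno
  obtain ⟨t, ht⟩ := isCompact_univ.elim_finite_subcover U hUo
    fun z _ => mem_iUnion.2 ⟨z, hxU z⟩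
  obtain ⟨p, hp⟩ := PartitionOfUnity.exists_isSubordinate (ι := t) isClosed_univ
    (fun i => U i) (fun i => hUo i) (by simpa [iUnion_subtype] using ht)
  apply hfy
  rw [← sum_stoneCechRestrict_smul p f, map_sum, BoundedContinuousFunction.sum_apply]
  exact Finset.sum_eq_zero fun i _ => hU i _ <|
    (cozero_stoneCechRestrict_smul_subset _ _).trans
      (preimage_mono ((subset_tsupport _).trans (hp i)))

theorem denseRange_of_isSupportPoint [Nontrivial E] (T : (X →ᵇ E) →+ (Y →ᵇ F))
    (hinj : Function.Injective T) (hT : IsSeparating T) {h : Y → StoneCech X}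
    (hh : ∀ y, IsSupportPoint T y (h y)) : DenseRange h := by
  refine dense_iff_inter_open.2 fun W hW ⟨z, hz⟩ => ?_
  obtain ⟨V, hV, hVc, hVW⟩ := exists_mem_nhds_isClosed_subset (hW.mem_nhds hz)
  obtain ⟨f, hf0, hf⟩ := exists_ne_zero_cozero_subset (E := E) isOpen_interior
    ⟨z, mem_interior_iff_mem_nhds.2 hV⟩
  obtain ⟨y, hy⟩ := DFunLike.ne_iff.1 ((map_ne_zero_iff T hinj).2 hf0)
  exact ⟨h y, hVW ((hh y).mem_of_cozero_subset hT hVc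
    (hf.trans (preimage_mono interior_subset)) hy), y, rfl⟩

end

theorem stmt_14_general {X Y E F : Type*}
    [TopologicalSpace X] [TopologicalSpace Y]
    [NormedAddCommGroup E] [NormedSpace ℝ E] [Nontrivial E]
    [NormedAddCommGroup F] [Nontrivial F]
    (T : (X →ᵇ E) → (Y →ᵇ F))
    (hbij : Function.Bijective T)
    (hadd : ∀ f g : X →ᵇ E, T (f + g) = T f + T g)
    (hsep : ∀ f g : X →ᵇ E, (∀ x, ‖f x‖ * ‖g x‖ = 0) → ∀ y, ‖T f y‖ * ‖T g y‖ = 0) :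
    ∃ h : Y → StoneCech X, Continuous h ∧ DenseRange h ∧ ∀ y : Y, IsSupportPoint T y (h y) := by
  let T' : (X →ᵇ E) →+ (Y →ᵇ F) := AddMonoidHom.mk' T hadd
  obtain ⟨v, hv⟩ := exists_ne (0 : F)
  obtain ⟨f, hf⟩ := hbij.2 (BoundedContinuousFunction.const Y v)
  have hfy : ∀ y, T f y ≠ 0 := fun y => by simpa [hf] using hv
  choose h hh using fun y => exists_isSupportPoint T' (hfy y)
  exact ⟨h, continuous_of_isSupportPoint hsep hh,
    denseRange_of_isSupportPoint T' hbij.1 hsep hh, hh⟩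

/-- For a biseparating `T : C*(X,E) → C*(Y,F)`, there is a continuous map
`h : Y → StoneCech X` with dense range sending each `y` to a support point of `y`. -/
theorem stmt_14 {X Y E F : Type*}
    [TopologicalSpace X] [T35Space X] [TopologicalSpace Y] [T35Space Y]
    [NormedAddCommGroup E] [NormedSpace ℝ E] [Nontrivial E]
    [NormedAddCommGroup F] [NormedSpace ℝ F] [Nontrivial F]
    (T : (X →ᵇ E) → (Y →ᵇ F))
    (hbij : Function.Bijective T)
    (hadd : ∀ f g : X →ᵇ E, T (f + g) = T f + T g)
    (hsep : ∀ f g : X →ᵇ E, (∀ x, ‖f x‖ * ‖g x‖ = 0) → ∀ y, ‖T f y‖ * ‖T g y‖ = 0)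
    (hsep' : ∀ f g : X →ᵇ E, (∀ y, ‖T f y‖ * ‖T g y‖ = 0) → ∀ x, ‖f x‖ * ‖g x‖ = 0) :
    ∃ h : Y → StoneCech X, Continuous h ∧ DenseRange h ∧ ∀ y : Y, IsSupportPoint T y (h y) :=
  stmt_14_general T hbij hadd hsep
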